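/- arXiv:2212.02005 — 2 statements merged into one kernel-verified Lean document; each statement's English description precedes it below -/
import Mathlib

section
/- Let Δ > 0 be a fundamental discriminant with conductor D, χ = χ_Δ, and ω a D-th root of unity of exact order d with d < D and d | D. Then (1/2)∑_{a=0}^{D-1} χ(a)(1+χ(a))ω^a = (1/2)·μ(d)·φ(D)/φ(d). -/
/-!
Since `χ² = 1`, the sum is the Gauss sum of `χ` against the additive character `x ↦ ω ^ x` of
`ZMod D`, plus the Gauss sum of the trivial character, i.e. the Ramanujan sum
`∑_{u ∈ (ZMod D)ˣ} ω ^ u`. As `ω ^ d = 1` with `D ∤ d`, the additive character is not primitive,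
so the Gauss sum of the primitive `χ` vanishes. Reduction `(ZMod D)ˣ → (ZMod d)ˣ` is surjective
with fibres of size `φ D / φ d`, and `∑_{v ∈ (ZMod d)ˣ} ω ^ v` is the sum of the primitive
`d`-th roots of unity, which is `μ d` by Möbius inversion of `∑_{ζ ^ m = 1} ζ = [m = 1]`.
-/

open Finset Polynomial
open scoped ArithmeticFunction.Moebius

theorem ZMod.sum_range_natCast {M : Type*} [AddCommMonoid M] (n : ℕ) [NeZero n]
    (f : ZMod n → M) : ∑ a ∈ range n, f a = ∑ x, f x :=
  sum_nbij' (↑) ZMod.val (by simp) (by simp [ZMod.val_lt])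
    (fun a ha ↦ ZMod.val_cast_of_lt (mem_range.1 ha)) (fun x _ ↦ ZMod.natCast_zmod_val x)
    (fun _ _ ↦ rfl)

theorem AddChar.not_isPrimitive_zmodChar {C : Type*} [CommMonoid C] (n : ℕ) [NeZero n]
    {ζ : C} (hζ : ζ ^ n = 1) {d : ℕ} (hζd : ζ ^ d = 1) (hd : (d : ZMod n) ≠ 0) :
    ¬ (zmodChar n hζ).IsPrimitive := fun h ↦ h hd <| by
  ext x
  rw [mulShift_apply, ← nsmul_eq_mul, map_nsmul_eq_pow, zmodChar_apply, ← pow_mul, pow_mul',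
    hζd, one_pow, one_apply]

theorem gaussSum_one_left_eq_sum_units {R R' : Type*} [CommRing R] [Fintype R] [DecidableEq R]
    [CommRing R'] (ψ : AddChar R R') : gaussSum (1 : MulChar R R') ψ = ∑ u : Rˣ, ψ u := by
  refine (Fintype.sum_of_injective _ Units.val_injective _ _ (fun a ha ↦ ?_) fun u ↦ ?_).symm
  · rw [MulChar.map_nonunit _ fun ⟨u, hu⟩ ↦ ha ⟨u, hu⟩, zero_mul]
  · rw [MulChar.one_apply_coe, one_mul]

theorem MonoidHom.sum_comp_of_surjective {G H M : Type*} [Group G] [Fintype G] [Group H]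
    [Fintype H] [AddCommMonoid M] (f : G →* H) (hf : Function.Surjective f) (F : H → M) :
    ∑ g, F (f g) = Nat.card f.ker • ∑ h, F h := by
  classical
  have hfiber (h : H) : #{g | f g = h} = Nat.card f.ker := by
    rw [card_fiber_eq_of_mem_range f (hf h) ⟨1, map_one f⟩, Nat.card_eq_fintype_card,
      ← Fintype.card_subtype]
    exact Fintype.card_congr (Equiv.refl _)
  rw [← sum_fiberwise' univ f F, smul_sum]
  simp only [sum_const, hfiber]

theorem MonoidHom.card_ker_mul_card_of_surjective {G H : Type*} [Group G] [Group H]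
    (f : G →* H) (hf : Function.Surjective f) : Nat.card f.ker * Nat.card H = Nat.card G := by
  rw [← f.ker.card_mul_index, Subgroup.index_ker f, f.range_eq_top_of_surjective hf,
    Subgroup.card_top]

theorem IsPrimitiveRoot.sum_nthRootsFinset_one {R : Type*} [CommRing R] [IsDomain R]
    {ζ : R} {n : ℕ} (hζ : IsPrimitiveRoot ζ n) (hn : 1 < n) :
    ∑ z ∈ nthRootsFinset n (1 : R), z = 0 := by
  classical
  have hval : (nthRootsFinset n (1 : R)).val = nthRoots n 1 :=
    Multiset.dedup_eq_self.mpr hζ.nthRoots_one_nodup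
  rw [sum_eq_multiset_sum, hval, hζ.nthRoots_eq (one_pow n), Multiset.map_map]
  simpa [sum_eq_multiset_sum, Function.comp_def] using hζ.geom_sum_eq_zero hn

theorem Complex.sum_primitiveRoots_eq_moebius {n : ℕ} (hn : 0 < n) :
    ∑ z ∈ primitiveRoots n ℂ, z = μ n := by
  have hdiv : ∀ m > 0,
      ∑ e ∈ m.divisors, ∑ z ∈ primitiveRoots e ℂ, z = if m = 1 then 1 else 0 := by
    intro m hm
    rcases eq_or_ne m 1 with rfl | hm1
    · simp
    rw [if_neg hm1, ← sum_biUnion fun i _ j _ hij ↦ IsPrimitiveRoot.disjoint hij,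
      ← IsPrimitiveRoot.nthRoots_one_eq_biUnion_primitiveRoots]
    exact (Complex.isPrimitiveRoot_exp m hm.ne').sum_nthRootsFinset_one (by omega)
  rw [← (ArithmeticFunction.sum_eq_iff_sum_mul_moebius_eq.mp hdiv) n hn,
    Nat.sum_divisorsAntidiagonal' fun a b ↦ (μ a : ℂ) * if b = 1 then 1 else 0]
  simp [hn.ne']

theorem IsPrimitiveRoot.sum_units_pow_val_eq_moebius {ω : ℂ} {n : ℕ} [NeZero n]
    (hω : IsPrimitiveRoot ω n) :
    ∑ u : (ZMod n)ˣ, ω ^ (u : ZMod n).val = μ n := by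
  have hn : 0 < n := NeZero.pos n
  rw [← Complex.sum_primitiveRoots_eq_moebius hn]
  refine sum_bij (fun u _ ↦ ω ^ (u : ZMod n).val)
    (fun u _ ↦ (mem_primitiveRoots hn).2 (hω.pow_of_coprime _ (ZMod.val_coe_unit_coprime u)))
    (fun u _ v _ h ↦
      Units.ext (ZMod.val_injective n (hω.pow_inj (ZMod.val_lt _) (ZMod.val_lt _) h)))
    (fun z hz ↦ ?_) fun _ _ ↦ rfl
  obtain ⟨i, hi, hcop, rfl⟩ := hω.isPrimitiveRoot_iff.1 ((mem_primitiveRoots hn).1 hz)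
  exact ⟨ZMod.unitOfCoprime i hcop, mem_univ _,
    by simp [ZMod.unitOfCoprime, ZMod.val_natCast_of_lt hi]⟩

theorem IsPrimitiveRoot.sum_units_pow_val_of_dvd {ω : ℂ} {d D : ℕ} [NeZero D]
    (hω : IsPrimitiveRoot ω d) (hd : d ∣ D) :
    ∑ u : (ZMod D)ˣ, ω ^ (u : ZMod D).val
      = μ d * D.totient / d.totient := by
  have : NeZero d := ⟨ne_zero_of_dvd_ne_zero (NeZero.ne D) hd⟩
  have hreduce (u : (ZMod D)ˣ) :
      ω ^ (u : ZMod D).val = ω ^ (ZMod.unitsMap hd u : ZMod d).val := by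
    have hcast : (ZMod.unitsMap hd u : ZMod d) = ((u : ZMod D).val : ZMod d) := by
      rw [ZMod.unitsMap_def, Units.coe_map, MonoidHom.coe_coe, ZMod.castHom_apply,
        ← ZMod.cast_natCast hd, ZMod.natCast_zmod_val]
    rw [hcast, ZMod.val_natCast, ← pow_eq_pow_mod _ hω.pow_eq_one]
  have hcard : Nat.card (ZMod.unitsMap hd).ker * d.totient = D.totient := by
    simpa only [Nat.card_eq_fintype_card (α := (ZMod _)ˣ), ZMod.card_units_eq_totient] using
      (ZMod.unitsMap hd).card_ker_mul_card_of_surjective (ZMod.unitsMap_surjective hd)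
  have htot : (d.totient : ℂ) ≠ 0 := by exact_mod_cast (Nat.totient_pos.2 (NeZero.pos d)).ne'
  rw [sum_congr rfl fun u _ ↦ hreduce u, MonoidHom.sum_comp_of_surjective _
    (ZMod.unitsMap_surjective hd) (fun v ↦ ω ^ (v : ZMod d).val), hω.sum_units_pow_val_eq_moebius,
    ← hcard, nsmul_eq_mul, Nat.cast_mul]
  field_simp

theorem stmt_7_general (D : ℕ) [NeZero D] (χ : DirichletCharacter ℂ D)
    (hprim : χ.IsPrimitive) (hquad : χ ^ 2 = 1)
    (d : ℕ) (hd : d ∣ D) (hdlt : d < D)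
    (ω : ℂ) (hω : IsPrimitiveRoot ω d) :
    (∑ a ∈ Finset.range D, χ (a : ZMod D) * (1 + χ (a : ZMod D)) * ω ^ a) / 2
      = (ArithmeticFunction.moebius d : ℂ) * (D.totient : ℂ) / (2 * (d.totient : ℂ)) := by
  have hωD : ω ^ D = 1 := (hω.pow_eq_one_iff_dvd D).2 hd
  set e := AddChar.zmodChar D hωD
  have hsplit : ∑ a ∈ range D, χ (a : ZMod D) * (1 + χ (a : ZMod D)) * ω ^ a
      = gaussSum χ e + gaussSum (χ ^ 2) e := by
    simp_rw [← AddChar.zmodChar_apply' hωD]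
    rw [ZMod.sum_range_natCast D fun x ↦ χ x * (1 + χ x) * e x, gaussSum, gaussSum,
      ← sum_add_distrib]
    refine sum_congr rfl fun x _ ↦ ?_
    rw [MulChar.pow_apply' χ two_ne_zero]
    ring
  have hgauss : gaussSum χ e = 0 := by
    refine gaussSum_eq_zero_of_isPrimitive_of_not_isPrimitive e hprim
      (AddChar.not_isPrimitive_zmodChar D hωD hω.pow_eq_one ?_)
    rw [Ne, ZMod.natCast_eq_zero_iff]
    exact fun h ↦ hdlt.ne (Nat.dvd_antisymm hd h)
  have hramanujan : gaussSum (χ ^ 2) e = μ d * D.totient / d.totient := by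
    rw [hquad, gaussSum_one_left_eq_sum_units]
    exact hω.sum_units_pow_val_of_dvd hd
  rw [hsplit, hgauss, hramanujan]
  ring

/-- For the even primitive quadratic character `χ = χ_Δ` of conductor `D = Δ > 0` and
`ω` a `D`-th root of unity of exact order `d` with `d ∣ D`, `d < D`, the Paley graph
eigenvalue `(1/2)∑_{a=0}^{D-1} χ(a)(1+χ(a))ω^a` equals `(1/2)·μ(d)·φ(D)/φ(d)`. -/
theorem stmt_7 (D : ℕ) [NeZero D] (χ : DirichletCharacter ℂ D)
    (hprim : χ.IsPrimitive) (hne : χ ≠ 1) (hquad : χ ^ 2 = 1)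
    (heven : χ (-1) = 1) (d : ℕ) (hd : d ∣ D) (hdlt : d < D)
    (ω : ℂ) (hω : IsPrimitiveRoot ω d) :
    (∑ a ∈ Finset.range D, χ (a : ZMod D) * (1 + χ (a : ZMod D)) * ω ^ a) / 2
      = (ArithmeticFunction.moebius d : ℂ) * (D.totient : ℂ) / (2 * (d.totient : ℂ)) :=
  stmt_7_general D χ hprim hquad d hd hdlt ω hω
end

section
/- Let Δ > 0 be a fundamental discriminant with conductor D, χ = χ_Δ, and let F = {0, 1, …, ⌊D/2⌋ − 1} ⊆ Z/D viewed as vertices of the generalized Paley graph P_Δ. Then the number of boundary edges |∂F| equals 2∑_{i=1}^k α_i, where α_1, …, α_k are the elements a ∈ [1, ⌊D/2⌋] with χ(a) = 1 and k = φ(D)/4. -/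
/-!
Group the boundary edges `(u, v)` by their difference `d = v - u`: those with difference `d`
correspond to the `u ∈ F` with `u + d ∉ F`, and since `F` is an interval of length `⌊D/2⌋`
in `ℤ/D` there are exactly `min(d, D - d)` of them. The connection set `{d | χ d = 1}` is
stable under `d ↦ -d` (`χ` is even) and, for `D > 2`, contains no unit with `-d = d`, so it is
the disjoint union of the `α_i` and the `-α_i`, each contributing `α_i`. The same pairing,
together with `χ` taking the values `±1` equally often on units, gives `φ(D) = 4k`.
-/

/-- The generalized Paley graph on `ZMod D`: `u ~ v` iff (`u ≠ v` and)
`χ(v - u) = 1` (for even `χ` this relation is symmetric). -/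
def paleyGraph (D : ℕ) [NeZero D] (χ : DirichletCharacter ℂ D) : SimpleGraph (ZMod D) :=
  SimpleGraph.fromRel (fun u v => χ (v - u) = 1)

open Finset

lemma Nat.card_filter_range_half_le_add_mod {D a : ℕ} (ha : a < D) :
    #{x ∈ range (D / 2) | D / 2 ≤ (x + a) % D} = min a (D - a) := by
  have hmod : ∀ x ∈ range (D / 2), (D / 2 ≤ (x + a) % D ↔ D / 2 ≤ x + a ∧ x + a < D) := by
    intro x hx
    rw [mem_range] at hx
    rcases Nat.lt_or_ge (x + a) D with h | h
    · rw [Nat.mod_eq_of_lt h]; omega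
    · rw [Nat.mod_eq_sub_mod h, Nat.mod_eq_of_lt (by omega)]; omega
  rw [filter_congr hmod]
  have hIco : {x ∈ range (D / 2) | D / 2 ≤ x + a ∧ x + a < D}
      = Ico (D / 2 - a) (min (D / 2) (D - a)) := by
    ext x
    simp only [mem_filter, mem_range, mem_Ico]
    omega
  rw [hIco, Nat.card_Ico]
  omega

lemma Finset.card_filter_mem_notMem_sub_mem {G : Type*} [AddCommGroup G] [Fintype G]
    [DecidableEq G] (F S : Finset G) :
    #{uv : G × G | uv.1 ∈ F ∧ uv.2 ∉ F ∧ uv.2 - uv.1 ∈ S} = ∑ d ∈ S, #{u ∈ F | u + d ∉ F} := by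
  rw [card_eq_sum_card_fiberwise (f := fun uv : G × G => uv.2 - uv.1) (t := S)
    (fun uv huv => (mem_filter.mp huv).2.2.2)]
  refine sum_congr rfl fun d hd => card_nbij' Prod.fst (fun u => (u, u + d)) ?_ ?_ ?_ ?_
  · intro uv huv
    simp only [mem_coe, mem_filter, mem_univ, true_and] at huv ⊢
    obtain ⟨⟨hu, hv, -⟩, rfl⟩ := huv
    simpa using And.intro hu hv
  · intro u hu
    simp only [mem_coe, mem_filter, mem_univ, true_and] at hu ⊢
    simpa using ⟨hu.1, hu.2, hd⟩
  · intro uv huv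
    simp only [mem_coe, mem_filter, mem_univ, true_and] at huv
    ext
    · rfl
    · simp [← huv.2]
  · intro u _
    rfl

namespace ZMod

lemma neg_ne_self_of_isUnit {D : ℕ} (hD : 2 < D) {d : ZMod D} (hd : IsUnit d) : -d ≠ d := by
  intro h
  have h2 : ((2 : ℕ) : ZMod D) = 0 := by
    apply hd.mul_left_eq_zero.mp
    linear_combination -h
  rw [natCast_eq_zero_iff] at h2
  exact absurd (Nat.le_of_dvd two_pos h2) (by omega)

variable {D : ℕ} [NeZero D]

lemma mem_image_natCast_range_iff {m : ℕ} (hm : m ≤ D) (u : ZMod D) :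
    u ∈ (range m).image (fun a : ℕ => (a : ZMod D)) ↔ u.val < m := by
  simp only [mem_image, mem_range]
  constructor
  · rintro ⟨a, ha, rfl⟩
    rwa [val_natCast, Nat.mod_eq_of_lt (by omega)]
  · exact fun h => ⟨u.val, h, natCast_zmod_val u⟩

lemma card_filter_add_notMem_image_range_half (d : ZMod D) :
    #{u ∈ (range (D / 2)).image (fun a : ℕ => (a : ZMod D)) |
        u + d ∉ (range (D / 2)).image (fun a : ℕ => (a : ZMod D))}
      = d.valMinAbs.natAbs := by
  have hF := mem_image_natCast_range_iff (D := D) (Nat.div_le_self D 2)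
  rw [valMinAbs_natAbs_eq_min, ← Nat.card_filter_range_half_le_add_mod d.val_lt]
  refine card_nbij' val (fun x => (x : ZMod D)) ?_ ?_ ?_ ?_
  · intro u hu
    simpa only [mem_coe, mem_filter, hF, not_lt, mem_range, ← val_add] using hu
  · intro x hx
    simp only [mem_coe, mem_filter, hF, not_lt, mem_range] at hx ⊢
    have hx' : (x : ZMod D).val = x := by rw [val_natCast, Nat.mod_eq_of_lt (by omega)]
    rwa [val_add, hx']
  · intro u _
    exact natCast_zmod_val u
  · intro x hx
    rw [mem_coe, mem_filter, mem_range] at hx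
    rw [val_natCast, Nat.mod_eq_of_lt (by omega)]

lemma sum_eq_two_nsmul_sum_filter_val_le_half {M : Type*} [AddCommMonoid M]
    {S : Finset (ZMod D)} (hneg : ∀ d ∈ S, -d ∈ S) (hne : ∀ d ∈ S, -d ≠ d)
    {f : ZMod D → M} (hf : ∀ d, f (-d) = f d) :
    ∑ d ∈ S, f d = 2 • ∑ d ∈ S with d.val ≤ D / 2, f d := by
  have hval : ∀ d ∈ S, (-d).val = D - d.val := fun d hd => by
    rw [neg_val, if_neg fun h => hne d hd (by simp [h])]
  have hhalf : ∀ d ∈ S, (-d).val ≤ D / 2 ↔ ¬ d.val ≤ D / 2 := fun d hd => by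
    have hval_ne : (-d).val ≠ d.val := fun h => hne d hd (val_injective D h)
    have := d.val_lt
    rw [hval d hd] at hval_ne ⊢
    omega
  rw [← sum_filter_add_sum_filter_not S (fun d => d.val ≤ D / 2), two_nsmul]
  congr 1
  refine sum_nbij' Neg.neg Neg.neg ?_ ?_ (fun d _ => neg_neg d) (fun d _ => neg_neg d)
    (fun d _ => (hf d).symm)
  · intro d hd
    rw [mem_filter] at hd ⊢
    exact ⟨hneg d hd.1, (hhalf d hd.1).mpr hd.2⟩
  · intro d hd
    rw [mem_filter] at hd ⊢
    refine ⟨hneg d hd.1, ?_⟩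
    rw [← hhalf (-d) (hneg d hd.1), neg_neg]
    exact hd.2

lemma sum_filter_Icc_eq_sum_filter_val_le {M : Type*} [AddCommMonoid M] {m : ℕ} (hm : m < D)
    (P : ZMod D → Prop) [DecidablePred P] (hP : ¬ P 0) (g : ℕ → M) :
    ∑ a ∈ (Icc 1 m).filter (fun a : ℕ => P a), g a = ∑ d with P d ∧ d.val ≤ m, g d.val := by
  refine sum_nbij' (fun a => (a : ZMod D)) val ?_ ?_ ?_ ?_ ?_
  · intro a ha
    simp only [mem_filter, mem_Icc, mem_univ, true_and] at ha ⊢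
    rw [val_natCast, Nat.mod_eq_of_lt (by omega)]
    exact ⟨ha.2, ha.1.2⟩
  · intro d hd
    simp only [mem_filter, mem_Icc, mem_univ, true_and, natCast_zmod_val] at hd ⊢
    refine ⟨⟨Nat.one_le_iff_ne_zero.mpr fun h => hP ?_, hd.2⟩, hd.1⟩
    rw [← (val_eq_zero d).mp h]
    exact hd.1
  · intro a ha
    simp only [mem_filter, mem_Icc] at ha
    rw [val_natCast, Nat.mod_eq_of_lt (by omega)]
  · intro d _
    exact natCast_zmod_val d
  · intro a ha
    simp only [mem_filter, mem_Icc] at ha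
    rw [val_natCast, Nat.mod_eq_of_lt (by omega)]

end ZMod

lemma DirichletCharacter.two_lt_of_ne_one {R : Type*} [CommMonoidWithZero R] {D : ℕ} [NeZero D]
    {χ : DirichletCharacter R D} (hχ : χ ≠ 1) : 2 < D := by
  have hD1 : D ≠ 1 := fun h => hχ (level_one' χ h)
  have hD2 : D ≠ 2 := by
    rintro rfl
    exact hχ (MulChar.ext fun a => by simp [Subsingleton.elim a 1])
  have := NeZero.ne D
  omega

lemma MulChar.two_mul_card_filter_eq_one_eq_card_units {R R' : Type*} [CommMonoid R] [Fintype R]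
    [DecidableEq R] [CommRing R'] [IsDomain R'] [CharZero R'] [DecidableEq R']
    {χ : MulChar R R'} (hχ : χ ≠ 1) (hquad : χ ^ 2 = 1) :
    2 * #{a | χ a = 1} = Fintype.card Rˣ := by
  have hvals := isQuadratic_iff_sq_eq_one.mpr hquad
  have hpoint : ∀ a, (1 : MulChar R R') a + χ a = if χ a = 1 then 2 else 0 := by
    intro a
    by_cases ha : IsUnit a
    · rw [one_apply ha]
      rcases hvals a with h | h | h
      · exact absurd (h ▸ ha.map χ) not_isUnit_zero
      · rw [h, if_pos rfl]; norm_num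
      · rw [h, if_neg (by norm_num)]; ring
    · rw [map_nonunit _ ha, map_nonunit _ ha, if_neg zero_ne_one]; ring
  have hsum := congrArg₂ (· + ·) (sum_one_eq_card_units (R := R) (R' := R'))
    (sum_eq_zero_of_ne_one hχ)
  simp only [← sum_add_distrib, hpoint, sum_ite, sum_const_zero, sum_const, add_zero,
    nsmul_eq_mul] at hsum
  have hcast : ((2 * #{a | χ a = 1} : ℕ) : R') = Fintype.card Rˣ := by
    push_cast
    rw [← hsum, mul_comm]
  exact_mod_cast hcast

lemma paleyGraph_adj_iff {D : ℕ} [NeZero D] {χ : DirichletCharacter ℂ D} (hD : 1 < D)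
    (heven : χ.Even) (u v : ZMod D) : (paleyGraph D χ).Adj u v ↔ χ (v - u) = 1 := by
  have : Nontrivial (ZMod D) := ZMod.nontrivial_iff.mpr (by omega)
  have hχneg : χ (u - v) = χ (v - u) := by
    rw [← neg_sub, heven.eval_neg]
  simp only [paleyGraph, SimpleGraph.fromRel_adj, hχneg, or_self, and_iff_right_iff_imp]
  rintro h rfl
  rw [sub_self, MulChar.map_zero] at h
  exact zero_ne_one h

open Classical in
theorem stmt_18_general (D : ℕ) [NeZero D] (χ : DirichletCharacter ℂ D)
    (hne : χ ≠ 1) (hquad : χ ^ 2 = 1) (heven : χ (-1) = 1) :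
    (Finset.univ.filter (fun uv : ZMod D × ZMod D =>
        uv.1 ∈ (Finset.range (D / 2)).image (fun a : ℕ => (a : ZMod D)) ∧
        uv.2 ∉ (Finset.range (D / 2)).image (fun a : ℕ => (a : ZMod D)) ∧
        (paleyGraph D χ).Adj uv.1 uv.2)).card
      = 2 * ∑ a ∈ (Finset.Icc 1 (D / 2)).filter (fun a : ℕ => χ (a : ZMod D) = 1), a ∧
    ((Finset.Icc 1 (D / 2)).filter (fun a : ℕ => χ (a : ZMod D) = 1)).card
      = D.totient / 4 := by
  have hD : 2 < D := χ.two_lt_of_ne_one hne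
  have : Nontrivial (ZMod D) := ZMod.nontrivial_iff.mpr (by omega)
  set F := (range (D / 2)).image (fun a : ℕ => (a : ZMod D))
  set S : Finset (ZMod D) := {d | χ d = 1}
  have hS_neg : ∀ d ∈ S, -d ∈ S := fun d hd => by
    simpa only [S, mem_filter, mem_univ, true_and, DirichletCharacter.Even.eval_neg χ d heven]
      using hd
  have hS_ne : ∀ d ∈ S, -d ≠ d := fun d hd => by
    refine ZMod.neg_ne_self_of_isUnit hD ?_
    by_contra hu
    simp [S, χ.map_nonunit hu] at hd
  have hfilter : ∀ g : ℕ → ℕ, ∑ d ∈ S with d.val ≤ D / 2, g d.val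
      = ∑ a ∈ (Icc 1 (D / 2)).filter (fun a : ℕ => χ (a : ZMod D) = 1), g a := by
    intro g
    rw [ZMod.sum_filter_Icc_eq_sum_filter_val_le (Nat.div_lt_self (by omega) one_lt_two)
      (fun d => χ d = 1) (by rw [MulChar.map_zero]; exact zero_ne_one), filter_filter]
  constructor
  · calc #{uv : ZMod D × ZMod D | uv.1 ∈ F ∧ uv.2 ∉ F ∧ (paleyGraph D χ).Adj uv.1 uv.2}
        = #{uv : ZMod D × ZMod D | uv.1 ∈ F ∧ uv.2 ∉ F ∧ uv.2 - uv.1 ∈ S} := by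
          simp only [S, mem_filter, mem_univ, true_and, paleyGraph_adj_iff (by omega) heven]
      _ = ∑ d ∈ S, #{u ∈ F | u + d ∉ F} := card_filter_mem_notMem_sub_mem F S
      _ = ∑ d ∈ S, d.valMinAbs.natAbs :=
          sum_congr rfl fun d _ => ZMod.card_filter_add_notMem_image_range_half d
      _ = 2 * ∑ d ∈ S with d.val ≤ D / 2, d.valMinAbs.natAbs :=
          ZMod.sum_eq_two_nsmul_sum_filter_val_le_half hS_neg hS_ne ZMod.natAbs_valMinAbs_neg
      _ = 2 * ∑ d ∈ S with d.val ≤ D / 2, d.val := by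
          congr 1
          refine sum_congr rfl fun d hd => ?_
          rw [ZMod.valMinAbs_natAbs_eq_min]
          have := (mem_filter.mp hd).2
          omega
      _ = _ := congrArg (2 * ·) (hfilter id)
  · have hcard_S : 2 * #S = D.totient := by
      rw [← ZMod.card_units_eq_totient]
      exact MulChar.two_mul_card_filter_eq_one_eq_card_units hne hquad
    have hcard_half : #S = 2 * #{d ∈ S | d.val ≤ D / 2} := by
      simpa only [sum_const, smul_eq_mul, mul_one] using
        ZMod.sum_eq_two_nsmul_sum_filter_val_le_half hS_neg hS_ne (f := fun _ => (1 : ℕ))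
          fun _ => rfl
    have hcard_Icc := hfilter 1
    simp only [Pi.one_apply, sum_const, smul_eq_mul, mul_one] at hcard_Icc
    omega

open Classical in
/-- For `F = {0, 1, …, ⌊D/2⌋ − 1} ⊆ Z/D` in the generalized Paley graph `P_Δ`
(`χ = χ_Δ` even primitive quadratic of conductor `D = Δ > 0`), the number of boundary
edges `|∂F|` equals `2·∑ α_i`, where the `α_i` are the `a ∈ [1, ⌊D/2⌋]` with
`χ(a) = 1`; moreover there are `k = φ(D)/4` of them. -/
theorem stmt_18 (D : ℕ) [NeZero D] (χ : DirichletCharacter ℂ D)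
    (hprim : χ.IsPrimitive) (hne : χ ≠ 1) (hquad : χ ^ 2 = 1) (heven : χ (-1) = 1) :
    (Finset.univ.filter (fun uv : ZMod D × ZMod D =>
        uv.1 ∈ (Finset.range (D / 2)).image (fun a : ℕ => (a : ZMod D)) ∧
        uv.2 ∉ (Finset.range (D / 2)).image (fun a : ℕ => (a : ZMod D)) ∧
        (paleyGraph D χ).Adj uv.1 uv.2)).card
      = 2 * ∑ a ∈ (Finset.Icc 1 (D / 2)).filter (fun a : ℕ => χ (a : ZMod D) = 1), a ∧
    ((Finset.Icc 1 (D / 2)).filter (fun a : ℕ => χ (a : ZMod D) = 1)).card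
      = D.totient / 4 :=
  stmt_18_general D χ hne hquad heven
end
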